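/- Let G be an ε-free VW-CCG grammar with maximal lexicon category size λ, maximal lexicon argument size α, maximal lexicon argument-count γ, and maximal rule degree d. Then the total number of characters needed to encode any derivation tree for a string w (tree structure together with all node labels) is O((λ + αγ)·|w| + αd·|w|²). -/
import Mathlib



/-- Categories of VW-CCG over atomic categories coded by natural numbers.
`slash d X Y` is `X /ᵈ Y` where `d = true` is a forward slash `/` and
`d = false` is a backward slash `\`. -/
inductive Cat : Type where
  | atom : ℕ → Cat
  | slash : Bool → Cat → Cat → Cat
deriving DecidableEq

namespace Cat

/-- The target (innermost atomic category). -/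
def target : Cat → ℕ
  | atom a => a
  | slash _ X _ => X.target

/-- The argument stack of a category, bottom of the stack first. -/
def args : Cat → List (Bool × Cat)
  | atom _ => []
  | slash d X Y => X.args ++ [(d, Y)]

/-- The number of arguments of a category. -/
def numArgs (X : Cat) : ℕ := X.args.length

/-- The size (number of symbols) of a category. -/
def size : Cat → ℕ
  | atom _ => 1
  | slash _ X Y => X.size + Y.size + 1

/-- `ArgOccurs p X` holds if the slash–category pair `p` occurs as an
argument somewhere inside the category `X`. -/
def ArgOccurs (p : Bool × Cat) : Cat → Prop
  | atom _ => False
  | slash d X Y => (d, Y) = p ∨ ArgOccurs p X ∨ ArgOccurs p Y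

end Cat

/-- Build `A /₁ X₁ ⋯ /ₘ Xₘ` from a target and an argument list. -/
def Cat.mk' (t : ℕ) (as : List (Bool × Cat)) : Cat :=
  as.foldl (fun c p => Cat.slash p.1 c p.2) (Cat.atom t)

/-- Push additional arguments on the stack of a category. -/
def appendArgs (X : Cat) (zs : List (Bool × Cat)) : Cat :=
  zs.foldl (fun c p => Cat.slash p.1 c p.2) X

/-- A VW-CCG combinatory rule: a (forward or backward) combinatory schema of
degree `zRestr.length`, optionally restricting the target of the variable `X`,
the category `Y`, and the slashes and categories of the arguments
`/₁ Z₁ ⋯ /_d Z_d` of the secondary input. -/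
structure Rule where
  fwd : Bool
  tRestr : Option ℕ
  yRestr : Option Cat
  zRestr : List (Bool × Option Cat)

/-- The degree of a rule. -/
def Rule.degree (r : Rule) : ℕ := r.zRestr.length

/-- `r.Inst L R O` holds if `L R ⇛ O` is a ground instance of the rule `r`:
forward: `X/Y  Y/₁Z₁⋯/_dZ_d ⇛ X/₁Z₁⋯/_dZ_d`;
backward: `Y/₁Z₁⋯/_dZ_d  X\Y ⇛ X/₁Z₁⋯/_dZ_d`, respecting the restrictions. -/
def Rule.Inst (r : Rule) (L R O : Cat) : Prop :=
  ∃ (X Y : Cat) (zs : List (Bool × Cat)),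
    (∀ t, r.tRestr = some t → X.target = t) ∧
    (∀ Y', r.yRestr = some Y' → Y = Y') ∧
    List.Forall₂ (fun (p : Bool × Option Cat) (z : Bool × Cat) =>
      z.1 = p.1 ∧ ∀ Z, p.2 = some Z → z.2 = Z) r.zRestr zs ∧
    O = appendArgs X zs ∧
    (if r.fwd then L = Cat.slash true X Y ∧ R = appendArgs Y zs
     else R = Cat.slash false X Y ∧ L = appendArgs Y zs)

/-- A VW-CCG grammar: a finite lexicon assigning categories to vocabulary
symbols (coded by naturals) or to the empty string (`none`), a finite set of
combinatory rules, and a distinguished atomic category. -/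
structure Grammar where
  lex : List (Option ℕ × Cat)
  rules : List Rule
  start : ℕ

/-- A grammar is ε-free if no lexicon entry is for the empty string. -/
def Grammar.EpsFree (G : Grammar) : Prop := ∀ e ∈ G.lex, e.1 ≠ none

/-- Derivation trees: leaves carry lexicon entries (`none` = empty string),
internal nodes carry categories and have exactly two children. -/
inductive DTree where
  | leaf : Option ℕ → Cat → DTree
  | node : Cat → DTree → DTree → DTree

namespace DTree

/-- The category at the root. -/
def top : DTree → Cat
  | leaf _ X => X
  | node X _ _ => X

/-- The yield: left-to-right concatenation of the symbols at the leaves. -/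
def yield : DTree → List ℕ
  | leaf none _ => []
  | leaf (some σ) _ => [σ]
  | node _ l r => l.yield ++ r.yield

/-- The total number of nodes. -/
def nodes : DTree → ℕ
  | leaf _ _ => 1
  | node _ l r => l.nodes + r.nodes + 1

/-- `τ.Valid G`: `τ` is a derivation tree of the grammar `G`. -/
def Valid (G : Grammar) : DTree → Prop
  | leaf σ X => (σ, X) ∈ G.lex
  | node X l r => Valid G l ∧ Valid G r ∧ ∃ rl ∈ G.rules, rl.Inst l.top r.top X

/-- `τ.CatAt C`: the category `C` labels some node of `τ`. -/
def CatAt : DTree → Cat → Prop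
  | leaf _ X, C => C = X
  | node X l r, C => C = X ∨ l.CatAt C ∨ r.CatAt C

end DTree

/-- The language generated by a grammar. -/
def Grammar.Lang (G : Grammar) : Set (List ℕ) :=
  { w | ∃ τ : DTree, τ.Valid G ∧ τ.top = Cat.atom G.start ∧ τ.yield = w }

/-- Number of characters needed to encode a derivation tree together with all
of the categories at its nodes. -/
def DTree.encSize : DTree → ℕ
  | DTree.leaf _ X => X.size + 2
  | DTree.node X l r => X.size + l.encSize + r.encSize + 1

section Aux

lemma Cat.one_le_size (X : Cat) : 1 ≤ X.size := by
  induction X with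
  | atom a => simp [Cat.size]
  | slash d X Y ihX ihY => simp [Cat.size]

lemma Cat.size_eq_args (X : Cat) :
    X.size = 1 + (X.args.map (fun p => p.2.size + 1)).sum := by
  induction X with
  | atom a => simp [Cat.size, Cat.args]
  | slash d X Y ihX ihY =>
    simp [Cat.size, Cat.args, ihX]
    omega

lemma Cat.argOccurs_of_mem_args (X : Cat) : ∀ p ∈ X.args, Cat.ArgOccurs p X := by
  induction X with
  | atom a => simp [Cat.args]
  | slash d X Y ihX ihY =>
    intro p hp
    simp [Cat.args] at hp
    show (d, Y) = p ∨ Cat.ArgOccurs p X ∨ Cat.ArgOccurs p Y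
    rcases hp with h | h
    · exact Or.inr (Or.inl (ihX p h))
    · exact Or.inl h.symm

lemma appendArgs_args (zs : List (Bool × Cat)) :
    ∀ X : Cat, (appendArgs X zs).args = X.args ++ zs := by
  induction zs with
  | nil => intro X; simp [appendArgs]
  | cons p zs ih =>
    intro X
    have h1 : appendArgs X (p :: zs) = appendArgs (Cat.slash p.1 X p.2) zs := rfl
    rw [h1, ih]
    simp [Cat.args]

lemma Cat.size_le_of_args (X : Cat) (a : ℕ) (h : ∀ p ∈ X.args, p.2.size ≤ a) :
    X.size ≤ 1 + 2 * a * X.numArgs := by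
  rw [Cat.size_eq_args]
  have hsum : (X.args.map (fun p => p.2.size + 1)).sum ≤
      (X.args.map (fun p => p.2.size + 1)).length * (2 * a) := by
    apply List.sum_le_card_nsmul
    intro x hx
    obtain ⟨p, hp, rfl⟩ := List.mem_map.mp hx
    have h1 := h p hp
    have h2 := Cat.one_le_size p.2
    omega
  simp only [List.length_map] at hsum
  have : X.numArgs * (2 * a) = 2 * a * X.numArgs := by ring
  simp only [Cat.numArgs] at *
  omega

lemma exists_lex_entry (G : Grammar) : ∀ τ : DTree, τ.Valid G → ∃ e, e ∈ G.lex := by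
  intro τ
  induction τ with
  | leaf σ X => intro hv; exact ⟨(σ, X), hv⟩
  | node X l r ihl ihr => intro hv; exact ihl hv.1

lemma main_bound (G : Grammar) (lam a γ d N K : ℕ)
    (hK1 : lam + 2 ≤ K)
    (hK2 : 2 + 2 * a * (γ + d * (N - 1)) ≤ K)
    (hε : G.EpsFree)
    (h1 : ∀ e ∈ G.lex, e.2.size ≤ lam)
    (h2 : ∀ e ∈ G.lex, ∀ p : Bool × Cat, Cat.ArgOccurs p e.2 → p.2.size ≤ a)
    (h3 : ∀ e ∈ G.lex, e.2.numArgs ≤ γ)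
    (h4 : ∀ r ∈ G.rules, r.degree ≤ d) :
    ∀ τ : DTree, τ.Valid G → τ.yield.length ≤ N →
      (∀ p ∈ τ.top.args, p.2.size ≤ a) ∧
      1 ≤ τ.yield.length ∧
      τ.top.numArgs ≤ γ + d * (τ.yield.length - 1) ∧
      τ.encSize + K ≤ 2 * τ.yield.length * K := by
  intro τ
  induction τ with
  | leaf σ X =>
    intro hv hN
    obtain ⟨s, rfl⟩ : ∃ s, σ = some s := by
      cases σ with
      | none => exact absurd rfl (hε _ hv)
      | some s => exact ⟨s, rfl⟩
    have hy : (DTree.leaf (some s) X).yield = [s] := rfl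
    refine ⟨?_, ?_, ?_, ?_⟩
    · intro p hp
      exact h2 _ hv p (Cat.argOccurs_of_mem_args X p hp)
    · show 1 ≤ 1
      exact Nat.le_refl 1
    · show X.numArgs ≤ γ + d * (1 - 1)
      have h3' : X.numArgs ≤ γ := h3 _ hv
      omega
    · show X.size + 2 + K ≤ 2 * 1 * K
      have hs : X.size ≤ lam := h1 _ hv
      omega
  | node X l r ihl ihr =>
    intro hv hN
    obtain ⟨hvl, hvr, rl, hrl, hinst⟩ := hv
    obtain ⟨X', Y, zs, -, -, hzs, hO, hdir⟩ := hinst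
    have hyN : (DTree.node X l r).yield.length = l.yield.length + r.yield.length := by
      simp [DTree.yield]
    have hNl : l.yield.length ≤ N := by
      rw [hyN] at hN; omega
    have hNr : r.yield.length ≤ N := by
      rw [hyN] at hN; omega
    obtain ⟨al, pl, nl, el⟩ := ihl hvl hNl
    obtain ⟨ar, pr, nr, er⟩ := ihr hvr hNr
    have hzlen : zs.length ≤ d := by
      have hl1 := hzs.length_eq
      have hl2 := h4 rl hrl
      simp only [Rule.degree] at hl2
      omega
    have hargsX : X.args = X'.args ++ zs := by
      rw [hO, appendArgs_args]
    -- common part: given primary/secondary structure, derive the three facts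
    have key : ∀ b : Bool, ∀ P S : DTree,
        (∀ p ∈ P.top.args, p.2.size ≤ a) → (∀ p ∈ S.top.args, p.2.size ≤ a) →
        P.top.numArgs ≤ γ + d * (P.yield.length - 1) →
        1 ≤ P.yield.length → 1 ≤ S.yield.length →
        P.yield.length + S.yield.length ≤ l.yield.length + r.yield.length →
        P.top = Cat.slash b X' Y → S.top = appendArgs Y zs →
        (∀ p ∈ X.args, p.2.size ≤ a) ∧
        X.numArgs ≤ γ + d * (l.yield.length + r.yield.length - 1) := by
      intro b P S aP aS nP pP pS hsum hP hS
      have hPargs : P.top.args = X'.args ++ [(b, Y)] := by rw [hP]; rfl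
      have hSargs : S.top.args = Y.args ++ zs := by rw [hS, appendArgs_args]
      constructor
      · intro p hp
        rw [hargsX] at hp
        rcases List.mem_append.mp hp with h | h
        · exact aP p (by rw [hPargs]; exact List.mem_append.mpr (Or.inl h))
        · exact aS p (by rw [hSargs]; exact List.mem_append.mpr (Or.inr h))
      · have hnX : X.numArgs = X'.args.length + zs.length := by
          simp [Cat.numArgs, hargsX]
        have hnP : P.top.numArgs = X'.args.length + 1 := by
          simp [Cat.numArgs, hPargs]
        rw [hnP] at nP
        -- numArgs X ≤ γ + d*(nP-1) - 1 + d ≤ γ + d*(n-1)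
        have hmono : d * (P.yield.length - 1) + d ≤
            d * (l.yield.length + r.yield.length - 1) := by
          have : P.yield.length - 1 + 1 ≤ l.yield.length + r.yield.length - 1 := by
            omega
          calc d * (P.yield.length - 1) + d = d * (P.yield.length - 1 + 1) := by ring
            _ ≤ d * (l.yield.length + r.yield.length - 1) :=
                Nat.mul_le_mul_left d this
        omega
    have hmain : (∀ p ∈ X.args, p.2.size ≤ a) ∧
        X.numArgs ≤ γ + d * (l.yield.length + r.yield.length - 1) := by
      by_cases hf : rl.fwd
      · rw [if_pos hf] at hdir
        exact key true l r al ar nl pl pr le_rfl hdir.1 hdir.2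
      · rw [if_neg hf] at hdir
        exact key false r l ar al nr pr pl (by omega) hdir.1 hdir.2
    refine ⟨?_, ?_, ?_, ?_⟩
    · intro p hp
      exact hmain.1 p hp
    · rw [hyN]; omega
    · rw [hyN]
      exact hmain.2
    -- encSize bound
    · have hsX : X.size ≤ 1 + 2 * a * X.numArgs := Cat.size_le_of_args X a hmain.1
      have hnA : X.numArgs ≤ γ + d * (N - 1) := by
        have h5 := hmain.2
        have : d * (l.yield.length + r.yield.length - 1) ≤ d * (N - 1) := by
          apply Nat.mul_le_mul_left
          rw [hyN] at hN
          omega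
        omega
      have hsX2 : X.size ≤ 1 + 2 * a * (γ + d * (N - 1)) := by
        have : 2 * a * X.numArgs ≤ 2 * a * (γ + d * (N - 1)) :=
          Nat.mul_le_mul_left _ hnA
        omega
      have hsK : X.size + 1 ≤ K := by omega
      have henc : (DTree.node X l r).encSize = X.size + l.encSize + r.encSize + 1 := rfl
      rw [henc, hyN]
      have hring : 2 * (l.yield.length + r.yield.length) * K =
          2 * l.yield.length * K + 2 * r.yield.length * K := by ring
      rw [hring]
      omega

end Aux

/-- For an ε-free VW-CCG grammar with maximal lexicon category size `lam`,
maximal lexicon argument size `α`, maximal lexicon argument count `γ` and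
maximal rule degree `d`, the space needed to encode a derivation tree for `w`
is `O((lam + α·γ)·|w| + α·d·|w|²)` (with a universal constant). -/


theorem encSize_bound :
    ∃ C : ℕ, ∀ (G : Grammar) (lam α γ d : ℕ) (τ : DTree) (w : List ℕ),
      G.EpsFree →
      (∀ e ∈ G.lex, e.2.size ≤ lam) →
      (∀ e ∈ G.lex, ∀ p : Bool × Cat, Cat.ArgOccurs p e.2 → p.2.size ≤ α) →
      (∀ e ∈ G.lex, e.2.numArgs ≤ γ) →
      (∀ r ∈ G.rules, r.degree ≤ d) →
      τ.Valid G → τ.yield = w →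
      τ.encSize ≤ C * ((lam + α * γ) * w.length + α * d * w.length ^ 2) := by
  refine ⟨10, ?_⟩
  intro G lam α γ d τ w hε h1 h2 h3 h4 hv hy
  subst hy
  set N := τ.yield.length with hNdef
  set K := lam + 2 * α * (γ + d * N) + 4 with hKdef
  have hK1 : lam + 2 ≤ K := by
    rw [hKdef]
    have := Nat.zero_le (2 * α * (γ + d * N))
    omega
  have hK2 : 2 + 2 * α * (γ + d * (N - 1)) ≤ K := by
    rw [hKdef]
    have hm : 2 * α * (γ + d * (N - 1)) ≤ 2 * α * (γ + d * N) := by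
      apply Nat.mul_le_mul_left
      have : d * (N - 1) ≤ d * N := Nat.mul_le_mul_left d (Nat.sub_le N 1)
      omega
    omega
  obtain ⟨-, hlen, -, henc⟩ :=
    main_bound G lam α γ d N K hK1 hK2 hε h1 h2 h3 h4 τ hv le_rfl
  obtain ⟨e, he⟩ := exists_lex_entry G τ hv
  have hlam : 1 ≤ lam := le_trans (Cat.one_le_size e.2) (h1 e he)
  have h2NK : τ.encSize ≤ 2 * N * K := le_trans (Nat.le_add_right _ _) henc
  have hfin : 2 * N * K ≤ 10 * ((lam + α * γ) * N + α * d * N ^ 2) := by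
    rw [hKdef]
    have hlN : N ≤ lam * N := Nat.le_mul_of_pos_left N hlam
    nlinarith [hlN, Nat.zero_le (α * γ * N), Nat.zero_le (α * d * N ^ 2)]
  exact le_trans h2NK hfin
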